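/- arXiv:1903.09416 — 3 statements merged into one kernel-verified Lean document; each statement's English description precedes it below -/
import Mathlib

section
/- Suppose for each box B a set F̃p(B) ⊆ ℝ³ satisfies F̃p(B/σ) ⊆ Fp(B) ⊆ F̃p(B) for some fixed σ > 1, where Fp is monotone (B' ⊆ B implies Fp(B') ⊆ Fp(B)). Define φ̃'(B) recursively on the subdivision tree: at the root, φ̃'(B) = {f ∈ Φ : f ∩ F̃p(B) ≠ ∅}; otherwise φ̃'(B) = {f ∈ φ̃'(parent(B)) : f ∩ F̃p(B) ≠ ∅}, and analogously for shrunk boxes B/σ using parent(B)/σ. Then for every box B in the tree: φ̃'(B/σ) ⊆ φ(B) ⊆ φ̃'(B), where φ(B) = {f ∈ Φ : f ∩ Fp(B) ≠ ∅}. -/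
/-!
Both recursions only ever intersect with further conditions on the way down the tree. So
φ̃'(B/σ) consists of features meeting F̃p(B/σ) ⊆ Fp(B). Conversely, a feature meeting Fp(B)
also meets Fp(parent B), because Fp is monotone and a child box lies in its parent; hence by
induction on depth it survives every filter above B, and it survives the filter at B since
Fp(B) ⊆ F̃p(B).
-/

open Set

section RecursiveFilter

variable {ι α : Type*} {root : ι} {parent : ι → ι} {depth : ι → ℕ}

theorem induction_of_depth_parent_lt (hdepth : ∀ B, B ≠ root → depth (parent B) < depth B)
    {P : ι → Prop} (root_case : P root) (step : ∀ B, B ≠ root → P (parent B) → P B)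
    (B : ι) : P B := by
  induction B using (measure depth).wf.induction with
  | _ B ih =>
    by_cases hB : B = root
    · exact hB ▸ root_case
    · exact step B hB (ih _ (hdepth B hB))

theorem recursive_filter_subset (hdepth : ∀ B, B ≠ root → depth (parent B) < depth B)
    {Φ : Set α} {p : ι → α → Prop} {φ : ι → Set α}
    (hroot : φ root = {f ∈ Φ | p root f})
    (hrec : ∀ B, B ≠ root → φ B = {f ∈ φ (parent B) | p B f}) (B : ι) :
    φ B ⊆ {f ∈ Φ | p B f} := by
  induction B using induction_of_depth_parent_lt hdepth with
  | root_case => exact hroot.le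
  | step B hB ih =>
    rw [hrec B hB]
    exact fun f hf => ⟨(ih hf.1).1, hf.2⟩

theorem subset_recursive_filter (hdepth : ∀ B, B ≠ root → depth (parent B) < depth B)
    {Φ : Set α} {p : ι → α → Prop} {φ : ι → Set α}
    (hroot : φ root = {f ∈ Φ | p root f})
    (hrec : ∀ B, B ≠ root → φ B = {f ∈ φ (parent B) | p B f})
    {S : ι → Set α} (hS : ∀ B, B ≠ root → S B ⊆ S (parent B))
    (hSp : ∀ B, S B ⊆ {f ∈ Φ | p B f}) (B : ι) : S B ⊆ φ B := by
  induction B using induction_of_depth_parent_lt hdepth with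
  | root_case => exact hroot ▸ hSp root
  | step B hB ih =>
    rw [hrec B hB]
    exact fun f hf => ⟨ih (hS B hB hf), (hSp B hf).2⟩

end RecursiveFilter

theorem sep_inter_nonempty_mono {Y : Type*} {Φ : Set (Set Y)} {s t : Set Y} (hst : s ⊆ t) :
    {f ∈ Φ | (f ∩ s).Nonempty} ⊆ {f ∈ Φ | (f ∩ t).Nonempty} :=
  fun _ hf => ⟨hf.1, hf.2.mono (inter_subset_inter_right _ hst)⟩

/- `Ft B`, `Fts B` stand for F̃p(B), F̃p(B/σ) and `φ' B`, `φ's B` for φ̃'(B), φ̃'(B/σ). -/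
theorem stmt7_general {X Y ι : Type*} (box : ι → Set X) (root : ι) (parent : ι → ι)
    (depth : ι → ℕ)
    (hdepth : ∀ B, B ≠ root → depth (parent B) < depth B)
    (hchild : ∀ B, B ≠ root → box B ⊆ box (parent B))
    (Fp : Set X → Set Y) (hmono : ∀ {A B : Set X}, A ⊆ B → Fp A ⊆ Fp B)
    (Φ : Set (Set Y)) (Ft Fts : ι → Set Y)
    (h1 : ∀ B, Fts B ⊆ Fp (box B)) (h2 : ∀ B, Fp (box B) ⊆ Ft B)
    (φ' φ's : ι → Set (Set Y))
    (hroot : φ' root = {f ∈ Φ | (f ∩ Ft root).Nonempty})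
    (hrec : ∀ B, B ≠ root → φ' B = {f ∈ φ' (parent B) | (f ∩ Ft B).Nonempty})
    (hroots : φ's root = {f ∈ Φ | (f ∩ Fts root).Nonempty})
    (hrecs : ∀ B, B ≠ root → φ's B = {f ∈ φ's (parent B) | (f ∩ Fts B).Nonempty}) :
    ∀ B, φ's B ⊆ {f ∈ Φ | (f ∩ Fp (box B)).Nonempty} ∧
      {f ∈ Φ | (f ∩ Fp (box B)).Nonempty} ⊆ φ' B := by
  intro B
  constructor
  · exact (recursive_filter_subset (p := fun B f => (f ∩ Fts B).Nonempty) hdepth hroots hrecs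
      B).trans (sep_inter_nonempty_mono (h1 B))
  · exact subset_recursive_filter (p := fun B f => (f ∩ Ft B).Nonempty) hdepth hroot hrec
      (S := fun B => {f ∈ Φ | (f ∩ Fp (box B)).Nonempty})
      (fun B hB => sep_inter_nonempty_mono (hmono (hchild B hB)))
      (fun B => sep_inter_nonempty_mono (h2 B)) B

/-- Boxes form a rooted subdivision tree (indexed by `ι`, with `parent`, `root`, and a
`depth` function decreasing towards the root); `box B` is the set of configurations of
box B and `sh B` is the set of configurations of the shrunk box B/σ.  `Fp` is the
monotone exact-footprint map, `Ft B` and `Fts B` are the approximate footprints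
F̃p(B) and F̃p(B/σ), satisfying F̃p(B/σ) ⊆ Fp(B) ⊆ F̃p(B).  The recursive feature sets
φ̃'(B) and φ̃'(B/σ) are defined from the feature set Φ as in the paper.  Then for every
box B: φ̃'(B/σ) ⊆ φ(B) ⊆ φ̃'(B), where φ(B) = {f ∈ Φ : f ∩ Fp(B) ≠ ∅}. -/
theorem stmt7 {X Y ι : Type*} (box sh : ι → Set X) (root : ι) (parent : ι → ι)
    (depth : ι → ℕ)
    (hdepth : ∀ B, B ≠ root → depth (parent B) < depth B)
    (hchild : ∀ B, B ≠ root → box B ⊆ box (parent B))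
    (hshParent : ∀ B, B ≠ root → sh B ⊆ sh (parent B))
    (hshSub : ∀ B, sh B ⊆ box B)
    (Fp : Set X → Set Y) (hmono : ∀ {A B : Set X}, A ⊆ B → Fp A ⊆ Fp B)
    (Φ : Set (Set Y)) (Ft Fts : ι → Set Y)
    (h1 : ∀ B, Fts B ⊆ Fp (box B)) (h2 : ∀ B, Fp (box B) ⊆ Ft B)
    (φ' φ's : ι → Set (Set Y))
    (hroot : φ' root = {f ∈ Φ | (f ∩ Ft root).Nonempty})
    (hrec : ∀ B, B ≠ root → φ' B = {f ∈ φ' (parent B) | (f ∩ Ft B).Nonempty})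
    (hroots : φ's root = {f ∈ Φ | (f ∩ Fts root).Nonempty})
    (hrecs : ∀ B, B ≠ root → φ's B = {f ∈ φ's (parent B) | (f ∩ Fts B).Nonempty}) :
    ∀ B, φ's B ⊆ {f ∈ Φ | (f ∩ Fp (box B)).Nonempty} ∧
      {f ∈ Φ | (f ∩ Fp (box B)).Nonempty} ⊆ φ' B :=
  stmt7_general box root parent depth hdepth hchild Fp hmono Φ Ft Fts h1 h2 φ' φ's hroot hrec hroots
    hrecs
end

section
/- Let C = {x ∈ P_C : ‖x−O‖ = r} be a circle in a plane P_C ⊂ ℝ³ and let p ∈ ℝ³ be a point. Let p' be the orthogonal projection of p onto P_C. If p' ≠ O, then the distance from p to C equals sqrt( (‖p'−O‖ − r)² + ‖p − p'‖² ) when ‖p'−O‖ ≥ 0; that is, Sep(C, {p})² = (‖p'−O‖ − r)² + dist(p, P_C)². -/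
/-!
Write `p = p' + t • n` with `p'` the projection of `p` to the plane and `t = ⟪p - O, n⟫`.
For every `x` in the plane, Pythagoras gives `‖x - p‖² = ‖x - p'‖² + t²`, so minimising
the distance to `p` over the circle amounts to minimising the planar distance to `p'`.
By the reverse triangle inequality that distance is at least `|‖p' - O‖ - r|`, with
equality at the point where the ray from `O` through `p'` meets the circle.
-/

noncomputable section

open scoped RealInnerProductSpace

/-- ℝ³ with the Euclidean norm. -/
abbrev V : Type := EuclideanSpace ℝ (Fin 3)

/-- Sep(A,B) = inf{‖a−b‖ : a ∈ A, b ∈ B}. -/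
noncomputable def sep (A B : Set V) : ℝ :=
  sInf {d | ∃ a ∈ A, ∃ b ∈ B, d = dist a b}

section Plane

variable {E : Type*} [NormedAddCommGroup E] [InnerProductSpace ℝ E]

def planeProj (O n p : E) : E := p - ⟪p - O, n⟫ • n

lemma sub_planeProj (O n p : E) : p - planeProj O n p = ⟪p - O, n⟫ • n := by
  rw [planeProj, sub_sub_cancel]

lemma inner_planeProj_sub {n : E} (hn : ‖n‖ = 1) (O p : E) :
    ⟪planeProj O n p - O, n⟫ = 0 := by
  have hnn : ⟪n, n⟫ = 1 := by rw [real_inner_self_eq_norm_sq, hn, one_pow]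
  rw [planeProj, sub_right_comm, inner_sub_left, real_inner_smul_left, hnn, mul_one, sub_self]

lemma norm_sub_sq_eq_norm_sub_planeProj_sq_add {n : E} (hn : ‖n‖ = 1) {O x : E}
    (hx : ⟪x - O, n⟫ = 0) (p : E) :
    ‖x - p‖ ^ 2 = ‖x - planeProj O n p‖ ^ 2 + ‖p - planeProj O n p‖ ^ 2 := by
  have horth : ⟪x - planeProj O n p, p - planeProj O n p⟫ = 0 := by
    rw [sub_planeProj, real_inner_smul_right, ← sub_sub_sub_cancel_right x _ O,
      inner_sub_left (x - O), hx, inner_planeProj_sub hn, sub_zero, mul_zero]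
  rw [← sub_sub_sub_cancel_right x p (planeProj O n p), norm_sub_sq_real, horth]
  ring

end Plane

lemma abs_norm_sub_sub_le_of_norm_sub_eq {E : Type*} [SeminormedAddCommGroup E]
    {O x : E} {r : ℝ} (hx : ‖x - O‖ = r) (y : E) : |‖y - O‖ - r| ≤ ‖x - y‖ := by
  rw [← hx, norm_sub_rev x y, ← sub_sub_sub_cancel_right y x O]
  exact abs_norm_sub_norm_le _ _

section Circle

variable {E : Type*} [NormedAddCommGroup E] [NormedSpace ℝ E]

lemma norm_add_div_norm_smul_sub {O y : E} (hy : y ≠ O) {r : ℝ} (hr : 0 ≤ r) :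
    ‖(O + (r / ‖y - O‖) • (y - O)) - O‖ = r := by
  have hd : 0 < ‖y - O‖ := norm_pos_iff.mpr (sub_ne_zero.mpr hy)
  rw [add_sub_cancel_left, norm_smul, Real.norm_of_nonneg (div_nonneg hr hd.le),
    div_mul_cancel₀ r hd.ne']

lemma norm_add_div_norm_smul_sub_sub {O y : E} (hy : y ≠ O) (r : ℝ) :
    ‖(O + (r / ‖y - O‖) • (y - O)) - y‖ = |‖y - O‖ - r| := by
  have hd : 0 < ‖y - O‖ := norm_pos_iff.mpr (sub_ne_zero.mpr hy)
  have hq : (O + (r / ‖y - O‖) • (y - O)) - y = ((r - ‖y - O‖) / ‖y - O‖) • (y - O) := by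
    rw [sub_div, div_self hd.ne', sub_smul, one_smul]
    abel
  rw [hq, norm_smul, Real.norm_eq_abs, abs_div, abs_of_pos hd, div_mul_cancel₀ _ hd.ne',
    abs_sub_comm]

end Circle

lemma sep_singleton_eq_dist {A : Set V} {p a₀ : V} (ha₀ : a₀ ∈ A)
    (hmin : ∀ a ∈ A, dist a₀ p ≤ dist a p) : sep A {p} = dist a₀ p := by
  refine IsLeast.csInf_eq ⟨⟨a₀, ha₀, p, rfl, rfl⟩, ?_⟩
  rintro _ ⟨a, ha, b, rfl, rfl⟩
  exact hmin a ha

/-- Let C = {x ∈ P_C : ‖x−O‖ = r} be the circle of radius r centered at O in the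
plane P_C through O with unit normal n, let p ∈ ℝ³ and let p' = p − ⟨p−O,n⟩n be the
orthogonal projection of p onto P_C.  If p' ≠ O, then
Sep(C, {p})² = (‖p'−O‖ − r)² + ‖p − p'‖², where ‖p − p'‖ = dist(p, P_C). -/
theorem stmt11 (O n p : V) (hn : ‖n‖ = 1) (r : ℝ) (hr : 0 ≤ r)
    (hp' : p - ⟪p - O, n⟫ • n ≠ O) :
    sep {x : V | ⟪x - O, n⟫ = 0 ∧ ‖x - O‖ = r} {p} ^ 2 =
      (‖(p - ⟪p - O, n⟫ • n) - O‖ - r) ^ 2 + ‖p - (p - ⟪p - O, n⟫ • n)‖ ^ 2 := by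
  change sep _ _ ^ 2 = (‖planeProj O n p - O‖ - r) ^ 2 + ‖p - planeProj O n p‖ ^ 2
  change planeProj O n p ≠ O at hp'
  set p' := planeProj O n p
  set q : V := O + (r / ‖p' - O‖) • (p' - O)
  have hq : ⟪q - O, n⟫ = 0 ∧ ‖q - O‖ = r := by
    refine ⟨?_, norm_add_div_norm_smul_sub hp' hr⟩
    rw [add_sub_cancel_left, real_inner_smul_left, inner_planeProj_sub hn, mul_zero]
  have hqp : ‖q - p‖ ^ 2 = (‖p' - O‖ - r) ^ 2 + ‖p - p'‖ ^ 2 := by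
    rw [norm_sub_sq_eq_norm_sub_planeProj_sq_add hn hq.1,
      norm_add_div_norm_smul_sub_sub hp', sq_abs]
  have hmin : ∀ x ∈ {x : V | ⟪x - O, n⟫ = 0 ∧ ‖x - O‖ = r}, dist q p ≤ dist x p := by
    rintro x ⟨hx, hxr⟩
    rw [dist_eq_norm, dist_eq_norm,
      ← pow_le_pow_iff_left₀ (norm_nonneg _) (norm_nonneg _) two_ne_zero, hqp,
      norm_sub_sq_eq_norm_sub_planeProj_sq_add hn hx, ← sq_abs (_ - r)]
    gcongr
    exact abs_norm_sub_sub_le_of_norm_sub_eq hxr p'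
  rw [sep_singleton_eq_dist hq hmin, dist_eq_norm, hqp]
end
end

section
/- Given the system of two quadratic equations a x² + b x + c = 0 and a' x² + b' x + c' = 0 in x (with a, a' ≠ 0), any common solution x satisfies (2a'A)²Δ = (a²Δ' − A² − (a')²Δ)², where A = det[[a,b],[a',b']] = ab' − a'b, Δ = b² − 4ac and Δ' = (b')² − 4a'c'. -/
/-- Given two quadratic equations a x² + b x + c = 0 and a' x² + b' x + c' = 0 with
a, a' ≠ 0, any common real solution x satisfies
(2a'A)²Δ = (a²Δ' − A² − (a')²Δ)², where A = ab' − a'b, Δ = b² − 4ac, Δ' = b'² − 4a'c'. -/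
theorem stmt16 (a b c a' b' c' x : ℝ) (ha : a ≠ 0) (ha' : a' ≠ 0)
    (h1 : a * x ^ 2 + b * x + c = 0) (h2 : a' * x ^ 2 + b' * x + c' = 0) :
    (2 * a' * (a * b' - a' * b)) ^ 2 * (b ^ 2 - 4 * a * c) =
      (a ^ 2 * (b' ^ 2 - 4 * a' * c') - (a * b' - a' * b) ^ 2 -
        a' ^ 2 * (b ^ 2 - 4 * a * c)) ^ 2 := by
  have hc : c = -(a * x ^ 2 + b * x) := by linarith
  have hc' : c' = -(a' * x ^ 2 + b' * x) := by linarith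
  subst hc hc'
  ring
end
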